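/- For every v ∈ ℝ and all x ≥ 0, y ≥ 0, one has (1/2)·[(d/dv)(ν''(v)/ν'(v)) + ν''(v)]·x + (γ/(2(1−γ)))·ν''(v)·y = −(a k·e^{−a k v}/(k⁻¹ + e^{−a k v})²)·[((a+1)/2)·x + (γ/(2(1−γ)))·y] ≤ 0, with strict inequality whenever x > 0 or y > 0. (This is the negativity of the solution-derivative of the transformed Hamiltonian's quadratic part, enabling the comparison argument in the uniqueness proof.) -/

import Mathlib

/-!
With `E = e^{-akv}` and `D = k⁻¹ + E`, one computes `ν' = kE/D` and `ν'' = -akE/D²`, so the ratio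
`ν''/ν' = -a/D` has derivative `a·ν''`. The quadratic part is therefore
`ν''·(((a+1)/2)·x + (γ/(2(1-γ)))·y)`, a negative number times a nonnegative combination
with positive coefficients.
-/

open Real

noncomputable def solTransform (a k v : ℝ) : ℝ := -(1 / a) * log (k⁻¹ + exp (-(a * k * v)))

section SolTransform

variable {a k : ℝ}

lemma hasDerivAt_exp_neg_mul (c w : ℝ) :
    HasDerivAt (fun w => exp (-(c * w))) (-c * exp (-(c * w))) w := by
  simpa [mul_comm] using ((hasDerivAt_id w).const_mul c).neg.exp

lemma solTransform_denom_pos (hk : 0 < k) (w : ℝ) : 0 < k⁻¹ + exp (-(a * k * w)) := by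
  positivity

lemma hasDerivAt_solTransform (ha : a ≠ 0) (hk : 0 < k) (w : ℝ) :
    HasDerivAt (solTransform a k)
      (k * exp (-(a * k * w)) / (k⁻¹ + exp (-(a * k * w)))) w := by
  have hD := ((hasDerivAt_exp_neg_mul (a * k) w).const_add k⁻¹).log
    (solTransform_denom_pos hk w).ne'
  refine (hD.const_mul (-(1 / a))).congr_deriv ?_
  field_simp

lemma deriv_solTransform (ha : a ≠ 0) (hk : 0 < k) :
    deriv (solTransform a k) = fun w => k * exp (-(a * k * w)) / (k⁻¹ + exp (-(a * k * w))) :=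
  funext fun w => (hasDerivAt_solTransform ha hk w).deriv

lemma deriv_deriv_solTransform (ha : a ≠ 0) (hk : 0 < k) :
    deriv (deriv (solTransform a k))
      = fun w => -(a * k * exp (-(a * k * w))) / (k⁻¹ + exp (-(a * k * w))) ^ 2 := by
  rw [deriv_solTransform ha hk]
  funext w
  have hD := (hasDerivAt_exp_neg_mul (a * k) w).const_add k⁻¹
  refine ((((hasDerivAt_exp_neg_mul (a * k) w).const_mul k).div hD
    (solTransform_denom_pos hk w).ne').congr_deriv ?_).deriv
  field_simp
  ring

lemma deriv_deriv_div_deriv_solTransform (ha : a ≠ 0) (hk : 0 < k) :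
    (fun w => deriv (deriv (solTransform a k)) w / deriv (solTransform a k) w)
      = fun w => -a / (k⁻¹ + exp (-(a * k * w))) := by
  funext w
  rw [deriv_deriv_solTransform ha hk, deriv_solTransform ha hk]
  have := (solTransform_denom_pos (a := a) hk w).ne'
  field_simp

lemma deriv_neg_div_solTransform_denom (hk : 0 < k) (w : ℝ) :
    deriv (fun w => -a / (k⁻¹ + exp (-(a * k * w)))) w
      = -(a ^ 2 * k * exp (-(a * k * w))) / (k⁻¹ + exp (-(a * k * w))) ^ 2 := by
  have hD := (hasDerivAt_exp_neg_mul (a * k) w).const_add k⁻¹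
  refine ((hasDerivAt_const w (-a)).div hD (solTransform_denom_pos hk w).ne').congr_deriv ?_ |>.deriv
  ring

end SolTransform

lemma add_mul_pos_of_pos_or {p q x y : ℝ} (hp : 0 < p) (hq : 0 < q) (hx : 0 ≤ x) (hy : 0 ≤ y)
    (hxy : 0 < x ∨ 0 < y) : 0 < p * x + q * y := by
  rcases hxy with h | h <;> nlinarith [mul_nonneg hp.le hx, mul_nonneg hq.le hy]

/-- Negativity of the solution-derivative of the transformed Hamiltonian's quadratic part:
`(1/2)·[(ν''/ν')' + ν'']·x + (γ/(2(1-γ)))·ν''·y` equals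
`-(ak·e^{-akv}/(k⁻¹+e^{-akv})²)·[((a+1)/2)x + (γ/(2(1-γ)))y] ≤ 0`, strictly if `x>0` or `y>0`. -/
theorem stmt_11 (a k γ : ℝ) (ha : 0 < a) (hk : 0 < k) (hγ : γ ∈ Set.Ioo (0:ℝ) 1) :
    let ν : ℝ → ℝ := fun v => -(1 / a) * Real.log (k⁻¹ + Real.exp (-(a * k * v)))
    let g : ℝ → ℝ := fun v => deriv (deriv ν) v / deriv ν v
    ∀ v x y : ℝ, 0 ≤ x → 0 ≤ y →
      ((1 / 2) * (deriv g v + deriv (deriv ν) v) * x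
          + (γ / (2 * (1 - γ))) * deriv (deriv ν) v * y
        = -((a * k * Real.exp (-(a * k * v))) / (k⁻¹ + Real.exp (-(a * k * v))) ^ 2)
            * (((a + 1) / 2) * x + (γ / (2 * (1 - γ))) * y)) ∧
      ((1 / 2) * (deriv g v + deriv (deriv ν) v) * x
          + (γ / (2 * (1 - γ))) * deriv (deriv ν) v * y ≤ 0) ∧
      ((0 < x ∨ 0 < y) →
        (1 / 2) * (deriv g v + deriv (deriv ν) v) * x
          + (γ / (2 * (1 - γ))) * deriv (deriv ν) v * y < 0) := by
  intro ν g v x y hx hy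
  have hg : g = fun w => -a / (k⁻¹ + exp (-(a * k * w))) :=
    deriv_deriv_div_deriv_solTransform ha.ne' hk
  have hν'' : deriv (deriv ν) = _ := deriv_deriv_solTransform ha.ne' hk
  have hc : 0 < γ / (2 * (1 - γ)) := div_pos hγ.1 (by linarith [hγ.2])
  have hF : 0 < a * k * exp (-(a * k * v)) / (k⁻¹ + exp (-(a * k * v))) ^ 2 := by positivity
  have heq : (1 / 2) * (deriv g v + deriv (deriv ν) v) * x
        + (γ / (2 * (1 - γ))) * deriv (deriv ν) v * y
      = -((a * k * exp (-(a * k * v))) / (k⁻¹ + exp (-(a * k * v))) ^ 2)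
          * (((a + 1) / 2) * x + (γ / (2 * (1 - γ))) * y) := by
    rw [hg, hν'', deriv_neg_div_solTransform_denom hk]
    ring
  refine ⟨heq, ?_, fun hxy => ?_⟩ <;> rw [heq]
  · exact mul_nonpos_of_nonpos_of_nonneg (neg_nonpos.2 hF.le) (by positivity)
  · exact mul_neg_of_neg_of_pos (neg_neg_of_pos hF)
      (add_mul_pos_of_pos_or (by positivity) hc hx hy hxy)
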